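/- Let Ω = B₁(0) ⊂ ℝ³, a(x) = 1 − ‖x‖², and 0 < ρ < 1/(4π). Every nonzero positive Borel measure μ on Ω̄ satisfying, for all Borel A ⊆ Ω̄, ρ μ(Ω̄) · Leb(A ∩ Ω) = ∫_A ‖x‖² dμ(x), is a positive scalar multiple of the measure (1/ρ − 4π) δ₀ + (1/‖x‖²) dx; i.e. the positive measure solution of the spectral problem is unique up to normalisation. -/

import Mathlib

/-!
The equation says that `‖x‖² μ = ρ μ(Ω̄) Leb|_Ω` as measures. Dividing by `‖x‖²` off the origin
gives `μ = μ{0} δ₀ + ρ μ(Ω̄) ‖x‖⁻² dx|_Ω`. In polar coordinates `∫_Ω ‖x‖⁻² dx = 4π`, so comparing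
total masses gives `μ{0} = μ(Ω̄) (1 - 4πρ) = ρ μ(Ω̄) (1/ρ - 4π)`.
-/

open MeasureTheory Set Metric
open scoped ENNReal

section Polar

variable {E : Type*} [NormedAddCommGroup E] [NormedSpace ℝ E] [Nontrivial E]
  [FiniteDimensional ℝ E] [MeasurableSpace E] [BorelSpace E] (μ : Measure E) [μ.IsAddHaarMeasure]

theorem lintegral_fun_norm_addHaar {f : ℝ → ℝ≥0∞} (hf : Measurable f) :
    ∫⁻ x, f ‖x‖ ∂μ = Module.finrank ℝ E * μ (ball 0 1) *
      ∫⁻ y in Ioi (0 : ℝ), ENNReal.ofReal (y ^ (Module.finrank ℝ E - 1)) * f y := by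
  have hfsnd : Measurable fun z : sphere (0 : E) 1 × Ioi (0 : ℝ) => f z.2 :=
    hf.comp (measurable_subtype_coe.comp measurable_snd)
  calc ∫⁻ x, f ‖x‖ ∂μ = ∫⁻ x : ({(0 : E)}ᶜ : Set E), f ‖x.1‖ ∂(μ.comap (↑)) := by
        rw [lintegral_subtype_comap (measurableSet_singleton _).compl (fun x : E => f ‖x‖),
          restrict_compl_singleton]
    _ = ∫⁻ z, f z.2 ∂μ.toSphere.prod (.volumeIoiPow (Module.finrank ℝ E - 1)) := by
        simpa using μ.measurePreserving_homeomorphUnitSphereProd.lintegral_comp hfsnd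
    _ = μ.toSphere univ * ∫⁻ y : Ioi (0 : ℝ), f y ∂.volumeIoiPow (Module.finrank ℝ E - 1) := by
        simp only [lintegral_prod _ hfsnd.aemeasurable, lintegral_const, mul_comm]
    _ = _ := by
        rw [Measure.toSphere_apply_univ, Measure.volumeIoiPow,
          lintegral_withDensity_eq_lintegral_mul _ (by fun_prop)
            (g := fun y : Ioi (0 : ℝ) => f y) (hf.comp measurable_subtype_coe)]
        exact congrArg _ (lintegral_subtype_comap measurableSet_Ioi
          fun y => ENNReal.ofReal (y ^ (Module.finrank ℝ E - 1)) * f y)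

theorem setLIntegral_ball_fun_norm_addHaar {f : ℝ → ℝ≥0∞} (hf : Measurable f) (r : ℝ) :
    ∫⁻ x in ball 0 r, f ‖x‖ ∂μ = Module.finrank ℝ E * μ (ball 0 1) *
      ∫⁻ y in Ioo 0 r, ENNReal.ofReal (y ^ (Module.finrank ℝ E - 1)) * f y := by
  have hball : (ball (0 : E) r).indicator (fun x => f ‖x‖) =
      fun x => (Iio r).indicator f ‖x‖ := by
    ext x
    by_cases hx : ‖x‖ < r <;> simp [indicator, hx]
  rw [← lintegral_indicator measurableSet_ball, hball,
    lintegral_fun_norm_addHaar μ (hf.indicator measurableSet_Iio), ← Ioi_inter_Iio, inter_comm,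
    ← Measure.restrict_restrict measurableSet_Iio, ← lintegral_indicator measurableSet_Iio]
  congr 2
  ext y
  by_cases hy : y ∈ Iio r <;> simp [hy]

end Polar

theorem lintegral_ball_inv_norm_sq_fin_three (r : ℝ) :
    ∫⁻ x in ball (0 : EuclideanSpace ℝ (Fin 3)) r, ENNReal.ofReal (1 / ‖x‖ ^ 2) =
      ENNReal.ofReal (4 * Real.pi * r) := by
  rw [setLIntegral_ball_fun_norm_addHaar _ (f := fun y => ENNReal.ofReal (1 / y ^ 2))
      (by fun_prop) r, finrank_euclideanSpace_fin,
    setLIntegral_congr_fun measurableSet_Ioo (g := fun _ => 1) fun y hy => ?_]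
  · rw [setLIntegral_const, one_mul, Real.volume_Ioo, sub_zero,
      EuclideanSpace.volume_ball_fin_three, ENNReal.ofReal_one, one_pow, one_mul,
      ← ENNReal.ofReal_natCast, ← ENNReal.ofReal_mul (by norm_num),
      ← ENNReal.ofReal_mul (by positivity)]
    congr 1
    ring
  · rw [← ENNReal.ofReal_mul (pow_nonneg hy.1.le _), mul_one_div_cancel (pow_pos hy.1 _).ne',
      ENNReal.ofReal_one]

section Density

variable {X : Type*} [MeasurableSpace X]

theorem withDensity_ofReal_eq_smul_of_setIntegral_eq {μ ν : Measure X} [IsFiniteMeasure ν]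
    {K : Set X} (hK : MeasurableSet K) (hμK : μ Kᶜ = 0) (hνK : ν Kᶜ = 0) {f : X → ℝ}
    (hf : IntegrableOn f K μ) (hf0 : ∀ x, 0 ≤ f x) {c : ℝ} (hc : 0 ≤ c)
    (h : ∀ A, MeasurableSet A → A ⊆ K → c * ν.real A = ∫ x in A, f x ∂μ) :
    μ.withDensity (fun x => ENNReal.ofReal (f x)) = ENNReal.ofReal c • ν := by
  ext s hs
  have hcνK : (ENNReal.ofReal c • ν) Kᶜ = 0 := by simp [hνK]
  rw [← measure_inter_conull (withDensity_absolutelyContinuous μ _ hμK),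
    ← measure_inter_conull hcνK, withDensity_apply _ (hs.inter hK),
    ← ofReal_integral_eq_lintegral_ofReal (hf.mono_set inter_subset_right) (ae_of_all _ hf0),
    ← h _ (hs.inter hK) inter_subset_right, ENNReal.ofReal_mul hc, ofReal_measureReal,
    Measure.smul_apply, smul_eq_mul]

/-- `f * g` is the indicator of `{f ≠ 0}`, because `0 * ∞ = 0` in `ℝ≥0∞`. -/
theorem restrict_add_withDensity_withDensity_of_mul_eq_one (μ : Measure X) {f g : X → ℝ≥0∞}
    (hf : Measurable f) (hg : Measurable g) (hfg : ∀ x, f x ≠ 0 → f x * g x = 1) :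
    μ.restrict {x | f x = 0} + (μ.withDensity f).withDensity g = μ := by
  have hzero : MeasurableSet {x | f x = 0} := hf (measurableSet_singleton 0)
  have hfg' : f * g = {x | f x = 0}ᶜ.indicator 1 := by
    ext x
    by_cases hx : f x = 0
    · simp [hx]
    · simp [hx, hfg x hx]
  rw [← withDensity_mul μ hf hg, hfg', withDensity_indicator_one hzero.compl,
    Measure.restrict_add_restrict_compl hzero]

end Density

section NormSq

variable {E : Type*} [NormedAddCommGroup E] [MeasurableSpace E] [OpensMeasurableSpace E]

theorem withDensity_norm_sq_eq_smul_restrict_ball [ProperSpace E] {μ ν : Measure E}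
    [IsFiniteMeasureOnCompacts μ] [IsFiniteMeasureOnCompacts ν] {r c : ℝ} (hc : 0 ≤ c)
    (hμ : μ (closure (ball 0 r))ᶜ = 0)
    (h : ∀ A, MeasurableSet A → A ⊆ closure (ball 0 r) →
      c * (ν (A ∩ ball 0 r)).toReal = ∫ x in A, ‖x‖ ^ 2 ∂μ) :
    μ.withDensity (fun x => ENNReal.ofReal (‖x‖ ^ 2)) =
      ENNReal.ofReal c • ν.restrict (ball 0 r) := by
  have : IsFiniteMeasure (ν.restrict (ball 0 r)) :=
    isFiniteMeasure_restrict.mpr measure_ball_lt_top.ne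
  refine withDensity_ofReal_eq_smul_of_setIntegral_eq isClosed_closure.measurableSet hμ ?_
    ((continuous_norm.pow 2).continuousOn.integrableOn_compact isBounded_ball.isCompact_closure)
    (fun x => sq_nonneg _) hc fun A hA hAK => ?_
  · rw [Measure.restrict_apply' measurableSet_ball,
      (disjoint_compl_left.mono_right subset_closure).inter_eq, measure_empty]
  · rw [Measure.real_def, Measure.restrict_apply hA]
    exact h A hA hAK

theorem eq_smul_dirac_add_withDensity_inv_norm_sq (μ : Measure E) :
    μ = μ {0} • Measure.dirac 0 + (μ.withDensity fun x => ENNReal.ofReal (‖x‖ ^ 2)).withDensity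
      fun x => ENNReal.ofReal (1 / ‖x‖ ^ 2) := by
  have hzero : {x : E | ENNReal.ofReal (‖x‖ ^ 2) = 0} = {0} := by
    ext x
    simp
  rw [← Measure.restrict_singleton, ← hzero]
  refine (restrict_add_withDensity_withDensity_of_mul_eq_one μ (by fun_prop) (by fun_prop)
    fun x hx => ?_).symm
  rw [← ENNReal.ofReal_mul (sq_nonneg _), mul_one_div_cancel (fun h => by simp [h] at hx),
    ENNReal.ofReal_one]

end NormSq

theorem stmt16_general (ρ : ℝ) (hρ0 : 0 < ρ)
    (μ : Measure (EuclideanSpace ℝ (Fin 3))) [IsFiniteMeasure μ] (hμ0 : μ ≠ 0)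
    (hμsupp : μ (closure (ball (0 : EuclideanSpace ℝ (Fin 3)) 1))ᶜ = 0)
    (hsol : ∀ A : Set (EuclideanSpace ℝ (Fin 3)), MeasurableSet A →
      A ⊆ closure (ball (0 : EuclideanSpace ℝ (Fin 3)) 1) →
      ρ * (μ (closure (ball (0 : EuclideanSpace ℝ (Fin 3)) 1))).toReal *
          (volume (A ∩ ball (0 : EuclideanSpace ℝ (Fin 3)) 1)).toReal =
        ∫ x in A, ‖x‖ ^ 2 ∂μ) :
    ∃ c : ℝ, 0 < c ∧
      μ = ENNReal.ofReal c •
        (ENNReal.ofReal (1 / ρ - 4 * Real.pi) •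
            Measure.dirac (0 : EuclideanSpace ℝ (Fin 3)) +
          (volume.restrict (ball (0 : EuclideanSpace ℝ (Fin 3)) 1)).withDensity
            (fun x => ENNReal.ofReal (1 / ‖x‖ ^ 2))) := by
  set M := (μ (closure (ball (0 : EuclideanSpace ℝ (Fin 3)) 1))).toReal
  have hμK : μ (closure (ball 0 1)) = μ univ := by
    rw [← univ_inter (closure _), measure_inter_conull hμsupp]
  have hμM : μ univ = ENNReal.ofReal M := by
    rw [← hμK, ENNReal.ofReal_toReal (measure_ne_top _ _)]
  have hM : 0 < M :=
    ENNReal.toReal_pos (hμK ▸ Measure.measure_univ_ne_zero.mpr hμ0) (measure_ne_top _ _)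
  have hc : 0 < ρ * M := mul_pos hρ0 hM
  have hdecomp := eq_smul_dirac_add_withDensity_inv_norm_sq μ
  rw [withDensity_norm_sq_eq_smul_restrict_ball hc.le hμsupp hsol,
    withDensity_smul_measure] at hdecomp
  have hatom : μ {0} = ENNReal.ofReal (ρ * M) * ENNReal.ofReal (1 / ρ - 4 * Real.pi) := by
    have hmass := congrArg (· univ) hdecomp
    simp only [Measure.add_apply, Measure.smul_apply, Measure.dirac_apply_of_mem (mem_univ _),
      withDensity_apply _ MeasurableSet.univ, Measure.restrict_univ, smul_eq_mul, mul_one,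
      hμM, lintegral_ball_inv_norm_sq_fin_three, ← ENNReal.ofReal_mul hc.le] at hmass
    rw [ENNReal.eq_sub_of_add_eq ENNReal.ofReal_ne_top hmass.symm,
      ← ENNReal.ofReal_sub _ (by positivity), ← ENNReal.ofReal_mul hc.le]
    congr 1
    field_simp
  refine ⟨ρ * M, hc, ?_⟩
  rw [hdecomp, hatom, smul_add, smul_smul]

/-- For `Ω = B₁(0) ⊂ ℝ³`, `a(x) = 1 - ‖x‖²` and `0 < ρ < 1/(4π)`, every nonzero
positive measure on `Ω̄` solving `ρ μ(Ω̄) Leb(A ∩ Ω) = ∫_A ‖x‖² dμ` for all Borel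
`A ⊆ Ω̄` is a positive scalar multiple of `(1/ρ - 4π) δ₀ + (1/‖x‖²) dx`. -/
theorem stmt16 (ρ : ℝ) (hρ0 : 0 < ρ) (hρ : ρ < 1 / (4 * Real.pi))
    (μ : Measure (EuclideanSpace ℝ (Fin 3))) [IsFiniteMeasure μ] (hμ0 : μ ≠ 0)
    (hμsupp : μ (closure (ball (0 : EuclideanSpace ℝ (Fin 3)) 1))ᶜ = 0)
    (hsol : ∀ A : Set (EuclideanSpace ℝ (Fin 3)), MeasurableSet A →
      A ⊆ closure (ball (0 : EuclideanSpace ℝ (Fin 3)) 1) →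
      ρ * (μ (closure (ball (0 : EuclideanSpace ℝ (Fin 3)) 1))).toReal *
          (volume (A ∩ ball (0 : EuclideanSpace ℝ (Fin 3)) 1)).toReal =
        ∫ x in A, ‖x‖ ^ 2 ∂μ) :
    ∃ c : ℝ, 0 < c ∧
      μ = ENNReal.ofReal c •
        (ENNReal.ofReal (1 / ρ - 4 * Real.pi) •
            Measure.dirac (0 : EuclideanSpace ℝ (Fin 3)) +
          (volume.restrict (ball (0 : EuclideanSpace ℝ (Fin 3)) 1)).withDensity
            (fun x => ENNReal.ofReal (1 / ‖x‖ ^ 2))) :=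
  stmt16_general ρ hρ0 μ hμ0 hμsupp hsol
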